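/- Let S be an RN module over ℝ with base (Ω, F, P), let E ∈ F̃ with P(E) > 0, and let x, y ∈ S with ‖x‖ = I_{A_{xy}} and ‖y‖ ≤ 1. If x and y are L⁰-independent on E, then there exist u_E, v_E ∈ S such that ‖u_E‖ = ‖v_E‖ = I_E and u_E − v_E = I_E(x − y). -/

import Mathlib

open MeasureTheory Filter Set

noncomputable section

namespace RNM

variable {Ω : Type*} [MeasurableSpace Ω]

/-- `L⁰(F, ℝ)`: equivalence classes of real random variables mod a.e. equality. -/
abbrev L0 (μ : Measure Ω) : Type _ := Ω →ₘ[μ] ℝ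

open Classical in
/-- The equivalence class of the indicator function of a (measurable) set. -/
noncomputable def ind (μ : Measure Ω) (A : Set Ω) : L0 μ :=
  if h : MeasurableSet A then
    AEEqFun.mk (A.indicator fun _ => (1 : ℝ)) (aestronglyMeasurable_const.indicator h)
  else 0

/-- The constant function, as an element of `L⁰`. -/
noncomputable def cst (μ : Measure Ω) (r : ℝ) : L0 μ := AEEqFun.const Ω r

/-- `A ⊂ B` modulo null sets. -/
def aeSub (μ : Measure Ω) (A B : Set Ω) : Prop := μ (A \ B) = 0

/-- `A = B` modulo null sets. -/
def aeEqS (μ : Measure Ω) (A B : Set Ω) : Prop := μ ((A \ B) ∪ (B \ A)) = 0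

variable {μ : Measure Ω} {S : Type*} [AddCommGroup S]

/-- The axioms of a random normed module over ℝ with base `(Ω, F, μ)`: `S` is a left module
over the algebra `L⁰(F,ℝ)` (with module multiplication `sm`) and `nrm` is an `L⁰`-norm. -/
structure IsRNModule (μ : Measure Ω) (sm : L0 μ → S → S) (nrm : S → L0 μ) : Prop where
  smul_add : ∀ ξ x y, sm ξ (x + y) = sm ξ x + sm ξ y
  add_smul : ∀ ξ η x, sm (ξ + η) x = sm ξ x + sm η x
  mul_smul : ∀ ξ η x, sm (ξ * η) x = sm ξ (sm η x)
  one_smul : ∀ x, sm 1 x = x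
  nrm_nonneg : ∀ x, 0 ≤ nrm x
  nrm_smul : ∀ ξ x, nrm (sm ξ x) = |ξ| * nrm x
  nrm_add : ∀ x y, nrm (x + y) ≤ nrm x + nrm y
  nrm_eq_zero : ∀ x, nrm x = 0 → x = 0

/-- `x` and `y` are `L⁰`-independent on `F`. -/
def Indep (sm : L0 μ → S → S) (x y : S) (F : Set Ω) : Prop :=
  ∀ ξ η : L0 μ, sm (ξ * ind μ F) x + sm (η * ind μ F) y = 0 →
    ξ * ind μ F = 0 ∧ η * ind μ F = 0

/-- `Rank_D(S) ≥ 2`. -/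
def RankGe2 (sm : L0 μ → S → S) (D : Set Ω) : Prop := ∃ x y : S, Indep sm x y D

/-- `A_x = [‖x‖ > 0]`. -/
def Aset (nrm : S → L0 μ) (x : S) : Set Ω := {ω | 0 < (nrm x) ω}

/-- `A_{xy} = A_x ∩ A_y`. -/
def Axy (nrm : S → L0 μ) (x y : S) : Set Ω := Aset nrm x ∩ Aset nrm y

/-- `B_{xy} = A_{xy} ∩ A_{x-y}`. -/
def Bxy (nrm : S → L0 μ) (x y : S) : Set Ω := Axy nrm x y ∩ Aset nrm (x - y)

/-- `H` is (a representative of) the support `H(S) = [⋁{‖x‖ : x ∈ S} > 0]`. -/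
def IsSupport (nrm : S → L0 μ) (H : Set Ω) : Prop :=
  MeasurableSet H ∧ (∀ x : S, aeSub μ (Aset nrm x) H) ∧
    ∀ B : Set Ω, MeasurableSet B → aeSub μ B H → 0 < μ B →
      ∃ x : S, 0 < μ (B ∩ Aset nrm x)

/-- A sequence in `S` is Cauchy for the topology of convergence in probability. -/
def CauchyInProb (μ : Measure Ω) (nrm : S → L0 μ) (u : ℕ → S) : Prop :=
  ∀ ε : ℝ, 0 < ε →
    Tendsto (fun p : ℕ × ℕ => μ {ω | ε ≤ |(nrm (u p.1 - u p.2)) ω|}) atTop (nhds 0)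

/-- `u n → x` in probability (i.e. `‖u n - x‖ → 0` in probability). -/
def TendstoInProb (μ : Measure Ω) (nrm : S → L0 μ) (u : ℕ → S) (x : S) : Prop :=
  ∀ ε : ℝ, 0 < ε →
    Tendsto (fun n => μ {ω | ε ≤ |(nrm (u n - x)) ω|}) atTop (nhds 0)

/-- Completeness of a random normed module. -/
def CompleteRN (μ : Measure Ω) (nrm : S → L0 μ) : Prop :=
  ∀ u : ℕ → S, CauchyInProb μ nrm u → ∃ x : S, TendstoInProb μ nrm u x

/-- The random unit sphere `S(1)`. -/
def sphere (nrm : S → L0 μ) : Set S :=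
  {x | ∃ A : Set Ω, MeasurableSet A ∧ 0 < μ A ∧ nrm x = ind μ A}

/-- The random closed unit ball `U(1)`. -/
def ball (nrm : S → L0 μ) : Set S := {x | nrm x ≤ 1}

/-- `ε` is an admissible random convexity parameter on `D`: `ε ≥ 0` and `0 < ε ≤ 2` on `D`. -/
def Admissible (μ : Measure Ω) (D : Set Ω) (ε : L0 μ) : Prop :=
  0 ≤ ε ∧ ∀ᵐ ω ∂μ, ω ∈ D → 0 < ε ω ∧ ε ω ≤ 2

/-- midpoint `(x+y)/2`. -/
def mid (μ : Measure Ω) (sm : L0 μ → S → S) (x y : S) : S := sm (cst μ (1/2)) (x + y)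

/-- The set whose infimum (in the a.s. order of `L⁰`) is the modulus of random
convexity `δ_D(ε)`. -/
def modSet (μ : Measure Ω) (sm : L0 μ → S → S) (nrm : S → L0 μ) (D : Set Ω) (ε : L0 μ) :
    Set (L0 μ) :=
  {z | ∃ x ∈ sphere nrm, ∃ y ∈ sphere nrm, aeSub μ D (Bxy nrm x y) ∧
    ε * ind μ D ≤ ind μ D * nrm (x - y) ∧
    z = ind μ D - ind μ D * nrm (mid μ sm x y)}

/-- `S` is random uniformly convex: `δ_{H(S)}(ε) > 0` on `H(S)` for every admissible `ε`. -/
def RandomUniformlyConvex (μ : Measure Ω) (sm : L0 μ → S → S) (nrm : S → L0 μ)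
    (H : Set Ω) : Prop :=
  ∀ ε : L0 μ, Admissible μ H ε → ∀ d : L0 μ, IsGLB (modSet μ sm nrm H ε) d →
    ∀ᵐ ω ∂μ, ω ∈ H → 0 < d ω

/-- `G` is (a representative of) `G(S)`. -/
def IsGSet (μ : Measure Ω) (sm : L0 μ → S → S) (H G : Set Ω) : Prop :=
  MeasurableSet G ∧ aeSub μ G H ∧ 0 < μ G ∧ RankGe2 sm G ∧
    ∀ D : Set Ω, MeasurableSet D → aeSub μ D (H \ G) → 0 < μ D → ¬ RankGe2 sm D

/-!
For a.e. `ω`, the coefficient map `(a, b) ↦ ‖a x + b y‖(ω)` agrees with a continuous function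
`N_ω` on `ℝ²`, the Lipschitz extension of its values at rational coefficients: `‖x‖, ‖y‖ ≤ 1`
make it `1`-Lipschitz in each coefficient. Let `c(t)` run from `(1, -1)` to `(-1, 1)` avoiding the
origin and compare `z = c₁ x + c₂ y` with `z - ‖z‖ (x - y)`: the difference of their norms is
`≤ 0` at `t = 0` because `‖x - y‖ ≤ 2`, and `> 0` at `t = 1` because `‖x - y‖ > 0` on `E` by
independence. A zero `τ(ω)`, chosen measurably as a countable infimum, yields `z` and
`w = z - ‖z‖ (x - y)` with `‖w‖ = ‖z‖`, which is positive on `E`, again by independence; then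
`u = I_E z / ‖z‖` and `v = I_E w / ‖z‖`.
-/

theorem ind_coeFn {A : Set Ω} (hA : MeasurableSet A) :
    ⇑(ind μ A) =ᵐ[μ] A.indicator fun _ => (1 : ℝ) := by
  rw [ind, dif_pos hA]
  exact AEEqFun.coeFn_mk _ _

theorem ind_le_one (A : Set Ω) : ind μ A ≤ 1 := by
  rw [← AEEqFun.coeFn_le]
  by_cases hA : MeasurableSet A
  · filter_upwards [ind_coeFn hA, AEEqFun.coeFn_one (β := ℝ) (μ := μ)] with ω h1 h2
    rw [h1, h2]
    exact Set.indicator_le_self' (fun _ _ => zero_le_one) ω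
  · filter_upwards [AEEqFun.coeFn_zero (β := ℝ) (μ := μ), AEEqFun.coeFn_one (β := ℝ) (μ := μ)]
      with ω h1 h2
    rw [ind, dif_neg hA, h1, h2]
    exact zero_le_one

namespace IsRNModule

variable {sm : L0 μ → S → S} {nrm : S → L0 μ} (h : IsRNModule μ sm nrm)
include h

theorem zero_smul (z : S) : sm 0 z = 0 := by
  have h0 := h.add_smul 0 0 z
  rwa [add_zero, left_eq_add] at h0

theorem neg_smul (ξ : L0 μ) (z : S) : sm (-ξ) z = -sm ξ z := by
  refine eq_neg_of_add_eq_zero_right ?_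
  rw [← h.add_smul, add_neg_cancel, h.zero_smul]

theorem smul_sub (ξ : L0 μ) (z w : S) : sm ξ (z - w) = sm ξ z - sm ξ w := by
  refine eq_sub_of_add_eq ?_
  rw [← h.smul_add, sub_add_cancel]

theorem sub_smul (ξ η : L0 μ) (z : S) : sm (ξ - η) z = sm ξ z - sm η z := by
  rw [sub_eq_add_neg, h.add_smul, h.neg_smul, sub_eq_add_neg]

theorem nrm_neg (z : S) : nrm (-z) = nrm z := by
  have habs : |(-1 : L0 μ)| = 1 := by
    refine AEEqFun.ext ?_
    filter_upwards [AEEqFun.coeFn_abs (-1 : L0 μ), AEEqFun.coeFn_neg (1 : L0 μ),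
      AEEqFun.coeFn_one (β := ℝ) (μ := μ)] with ω h1 h2 h3
    rw [h1, h2, Pi.neg_apply, h3, Pi.one_apply, abs_neg, abs_one]
  calc nrm (-z) = nrm (sm (-1) z) := by rw [h.neg_smul, h.one_smul]
    _ = nrm z := by rw [h.nrm_smul, habs, one_mul]

theorem abs_nrm_sub_nrm_le_ae (z w : S) : ∀ᵐ ω ∂μ, |nrm z ω - nrm w ω| ≤ nrm (z - w) ω := by
  have hz : nrm z ≤ nrm w + nrm (z - w) := by simpa using h.nrm_add w (z - w)
  have hw : nrm w ≤ nrm z + nrm (z - w) := by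
    rw [← h.nrm_neg (z - w), neg_sub]
    simpa using h.nrm_add z (w - z)
  filter_upwards [AEEqFun.coeFn_le.mpr hz, AEEqFun.coeFn_le.mpr hw,
    AEEqFun.coeFn_add (nrm w) (nrm (z - w)), AEEqFun.coeFn_add (nrm z) (nrm (z - w))]
    with ω h1 h2 h3 h4
  rw [h3, Pi.add_apply] at h1
  rw [h4, Pi.add_apply] at h2
  exact abs_sub_le_iff.mpr ⟨by linarith, by linarith⟩

theorem exists_nrm_eq_ind_of_nrm_eq {E : Set Ω} (hE : MeasurableSet E) {z w d : S} {k : L0 μ}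
    (hk : ∀ᵐ ω ∂μ, ω ∈ E → 0 < k ω) (hz : ∀ᵐ ω ∂μ, ω ∈ E → nrm z ω = k ω)
    (hw : ∀ᵐ ω ∂μ, ω ∈ E → nrm w ω = k ω) (hzw : z - w = sm k d) :
    ∃ u v : S, nrm u = ind μ E ∧ nrm v = ind μ E ∧ u - v = sm (ind μ E) d := by
  set ι : L0 μ := AEEqFun.mk (E.indicator fun ω => (k ω)⁻¹)
    (k.measurable.inv.indicator hE).aestronglyMeasurable
  have hι : ⇑ι =ᵐ[μ] E.indicator fun ω => (k ω)⁻¹ := AEEqFun.coeFn_mk _ _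
  have habs : |ι| = ι := AEEqFun.ext <| by
    filter_upwards [AEEqFun.coeFn_abs ι, hι, hk] with ω e1 e2 hkω
    rw [e1, e2]
    by_cases hω : ω ∈ E
    · rw [indicator_of_mem hω, abs_of_pos (inv_pos.mpr (hkω hω))]
    · rw [indicator_of_notMem hω, abs_zero]
  have hmul : ∀ p : L0 μ, (∀ᵐ ω ∂μ, ω ∈ E → p ω = k ω) → ι * p = ind μ E := fun p hp =>
    AEEqFun.ext <| by
      filter_upwards [AEEqFun.coeFn_mul ι p, hι, hp, hk, ind_coeFn hE] with ω e1 e2 hpω hkω e3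
      rw [e1, Pi.mul_apply, e2, e3]
      by_cases hω : ω ∈ E
      · rw [indicator_of_mem hω, indicator_of_mem hω, hpω hω, inv_mul_cancel₀ (hkω hω).ne']
      · rw [indicator_of_notMem hω, indicator_of_notMem hω, zero_mul]
  refine ⟨sm ι z, sm ι w, ?_, ?_, ?_⟩
  · rw [h.nrm_smul, habs, hmul _ hz]
  · rw [h.nrm_smul, habs, hmul _ hw]
  · rw [← h.smul_sub, hzw, ← h.mul_smul, hmul k (ae_of_all _ fun _ _ => rfl)]

variable {x y : S} (hx : nrm x ≤ 1) (hy : nrm y ≤ 1)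
include hx hy

theorem nrm_smul_add_smul_le_ae (a b : L0 μ) :
    ∀ᵐ ω ∂μ, nrm (sm a x + sm b y) ω ≤ |a ω| + |b ω| := by
  have hle : nrm (sm a x + sm b y) ≤ |a| * nrm x + |b| * nrm y := by
    simpa only [h.nrm_smul] using h.nrm_add (sm a x) (sm b y)
  filter_upwards [AEEqFun.coeFn_le.mpr hle, AEEqFun.coeFn_le.mpr hx, AEEqFun.coeFn_le.mpr hy,
    AEEqFun.coeFn_add (|a| * nrm x) (|b| * nrm y), AEEqFun.coeFn_mul |a| (nrm x),
    AEEqFun.coeFn_mul |b| (nrm y), AEEqFun.coeFn_abs a, AEEqFun.coeFn_abs b,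
    AEEqFun.coeFn_one (β := ℝ) (μ := μ)] with ω h1 h2 h3 e1 e2 e3 e4 e5 e6
  simp only [e1, e2, e3, e4, e5, e6, Pi.add_apply, Pi.mul_apply, Pi.one_apply] at h1 h2 h3
  calc nrm (sm a x + sm b y) ω ≤ |a ω| * nrm x ω + |b ω| * nrm y ω := h1
    _ ≤ |a ω| + |b ω| := add_le_add (mul_le_of_le_one_right (abs_nonneg _) h2)
        (mul_le_of_le_one_right (abs_nonneg _) h3)

theorem nrm_smul_add_smul_lipschitz_ae (a b a' b' : L0 μ) :
    ∀ᵐ ω ∂μ, |nrm (sm a x + sm b y) ω - nrm (sm a' x + sm b' y) ω|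
      ≤ |a ω - a' ω| + |b ω - b' ω| := by
  have hsub : sm a x + sm b y - (sm a' x + sm b' y) = sm (a - a') x + sm (b - b') y := by
    rw [h.sub_smul, h.sub_smul]
    abel
  filter_upwards [h.abs_nrm_sub_nrm_le_ae (sm a x + sm b y) (sm a' x + sm b' y),
    h.nrm_smul_add_smul_le_ae hx hy (a - a') (b - b'), AEEqFun.coeFn_sub a a',
    AEEqFun.coeFn_sub b b'] with ω h1 h2 e1 e2
  rw [hsub] at h1
  rw [e1, e2, Pi.sub_apply, Pi.sub_apply] at h2
  exact h1.trans h2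

end IsRNModule

section RatLipExt

/-- The McShane extension of `max φ 0` from `ℚ²` to `ℝ²`, for the `ℓ¹` distance. -/
def ratLipExt (φ : ℚ × ℚ → ℝ) (v : ℝ × ℝ) : ℝ :=
  ⨅ r : ℚ × ℚ, (max (φ r) 0 + (|v.1 - r.1| + |v.2 - r.2|))

variable {φ : ℚ × ℚ → ℝ}

theorem bddBelow_ratLipExt (φ : ℚ × ℚ → ℝ) (v : ℝ × ℝ) :
    BddBelow (range fun r : ℚ × ℚ => max (φ r) 0 + (|v.1 - r.1| + |v.2 - r.2|)) :=
  ⟨0, by rintro _ ⟨r, rfl⟩; positivity⟩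

theorem ratLipExt_nonneg (v : ℝ × ℝ) : 0 ≤ ratLipExt φ v :=
  le_ciInf fun _ => by positivity

theorem ratLipExt_le (v : ℝ × ℝ) (r : ℚ × ℚ) :
    ratLipExt φ v ≤ max (φ r) 0 + (|v.1 - r.1| + |v.2 - r.2|) :=
  ciInf_le (bddBelow_ratLipExt φ v) r

theorem ratLipExt_le_add (v w : ℝ × ℝ) :
    ratLipExt φ v ≤ ratLipExt φ w + (|v.1 - w.1| + |v.2 - w.2|) := by
  rw [← sub_le_iff_le_add]
  refine le_ciInf fun r => ?_
  have h1 := abs_sub_le v.1 w.1 r.1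
  have h2 := abs_sub_le v.2 w.2 r.2
  linarith [ratLipExt_le (φ := φ) v r]

theorem continuous_ratLipExt (φ : ℚ × ℚ → ℝ) : Continuous (ratLipExt φ) := by
  refine (LipschitzWith.of_dist_le_mul fun v w => ?_ : LipschitzWith 2 (ratLipExt φ)).continuous
  have h1 : |v.1 - w.1| ≤ dist v w := by rw [← Real.dist_eq]; exact le_max_left _ _
  have h2 : |v.2 - w.2| ≤ dist v w := by rw [← Real.dist_eq]; exact le_max_right _ _
  rw [Real.dist_eq, abs_sub_le_iff]
  push_cast
  constructor <;> linarith [ratLipExt_le_add (φ := φ) v w, ratLipExt_le_add (φ := φ) w v,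
    abs_sub_comm v.1 w.1, abs_sub_comm v.2 w.2]

theorem ratLipExt_eq {v : ℝ × ℝ} {c : ℝ} (hc : 0 ≤ c)
    (hφ : ∀ r : ℚ × ℚ, |φ r - c| ≤ |v.1 - r.1| + |v.2 - r.2|) : ratLipExt φ v = c := by
  refine le_antisymm (le_of_forall_pos_lt_add fun ε hε => ?_) (le_ciInf fun r => ?_)
  · obtain ⟨q₁, hq₁⟩ := exists_rat_btwn (show v.1 - ε / 4 < v.1 + ε / 4 by linarith)
    obtain ⟨q₂, hq₂⟩ := exists_rat_btwn (show v.2 - ε / 4 < v.2 + ε / 4 by linarith)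
    have h1 : |v.1 - q₁| < ε / 4 := abs_sub_lt_iff.mpr ⟨by linarith, by linarith⟩
    have h2 : |v.2 - q₂| < ε / 4 := abs_sub_lt_iff.mpr ⟨by linarith, by linarith⟩
    have hr := abs_sub_le_iff.mp (hφ (q₁, q₂))
    have hmax : max (φ (q₁, q₂)) 0 ≤ c + (|v.1 - q₁| + |v.2 - q₂|) :=
      max_le (by linarith [hr.1]) (by positivity)
    linarith [ratLipExt_le (φ := φ) v (q₁, q₂)]
  · linarith [le_max_left (φ r) 0, (abs_sub_le_iff.mp (hφ r)).2]

theorem measurable_ratLipExt {φ : Ω → ℚ × ℚ → ℝ}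
    (hφ : ∀ r, Measurable fun ω => φ ω r) {f : Ω → ℝ × ℝ} (hf : Measurable f) :
    Measurable fun ω => ratLipExt (φ ω) (f ω) :=
  Measurable.iInf fun r => ((hφ r).max measurable_const).add
    ((hf.fst.sub measurable_const).abs.add (hf.snd.sub measurable_const).abs)

end RatLipExt

variable {sm : L0 μ → S → S} {nrm : S → L0 μ} {x y : S}

variable (sm nrm) in
/-- A pointwise version of `(a, b) ↦ ‖a x + b y‖`, built from rational coefficients only
(see `IsRNModule.nrm_smul_add_smul_ae`). -/
def coeffNorm (x y : S) (ω : Ω) : ℝ × ℝ → ℝ :=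
  ratLipExt fun r => nrm (sm (cst μ r.1) x + sm (cst μ r.2) y) ω

theorem continuous_coeffNorm (ω : Ω) : Continuous (coeffNorm sm nrm x y ω) :=
  continuous_ratLipExt _

theorem measurable_coeffNorm {f : Ω → ℝ × ℝ} (hf : Measurable f) :
    Measurable fun ω => coeffNorm sm nrm x y ω (f ω) :=
  measurable_ratLipExt (fun _ => AEEqFun.measurable _) hf

namespace IsRNModule

variable (h : IsRNModule μ sm nrm) (hx : nrm x ≤ 1) (hy : nrm y ≤ 1)
include h hx hy

theorem nrm_smul_add_smul_ae (a b : L0 μ) :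
    ∀ᵐ ω ∂μ, nrm (sm a x + sm b y) ω = coeffNorm sm nrm x y ω (a ω, b ω) := by
  have hlip : ∀ᵐ ω ∂μ, ∀ r : ℚ × ℚ, |nrm (sm (cst μ r.1) x + sm (cst μ r.2) y) ω
      - nrm (sm a x + sm b y) ω| ≤ |a ω - r.1| + |b ω - r.2| := by
    refine ae_all_iff.mpr fun r => ?_
    filter_upwards [h.nrm_smul_add_smul_lipschitz_ae hx hy (cst μ r.1) (cst μ r.2) a b,
      AEEqFun.coeFn_const Ω (r.1 : ℝ), AEEqFun.coeFn_const Ω (r.2 : ℝ)] with ω hω e1 e2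
    rwa [cst, cst, e1, e2, Function.const_apply, Function.const_apply, abs_sub_comm _ (a ω),
      abs_sub_comm _ (b ω)] at hω
  filter_upwards [hlip, AEEqFun.coeFn_le.mpr (h.nrm_nonneg (sm a x + sm b y)),
    AEEqFun.coeFn_zero (β := ℝ) (μ := μ)] with ω hω h0 e0
  rw [e0] at h0
  exact (ratLipExt_eq h0 hω).symm

theorem coeffNorm_smul_ae :
    ∀ᵐ ω ∂μ, ∀ s : ℝ, coeffNorm sm nrm x y ω (s • (1, -1)) = |s| * nrm (x - y) ω := by
  have hrat : ∀ᵐ ω ∂μ, ∀ q : ℚ,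
      coeffNorm sm nrm x y ω ((q : ℝ) • (1, -1)) = |(q : ℝ)| * nrm (x - y) ω := by
    refine ae_all_iff.mpr fun q => ?_
    have hcomb : sm (cst μ q) x + sm (-cst μ q) y = sm (cst μ q) (x - y) := by
      rw [h.neg_smul, h.smul_sub, sub_eq_add_neg]
    filter_upwards [h.nrm_smul_add_smul_ae hx hy (cst μ q) (-cst μ q),
      AEEqFun.coeFn_const Ω (q : ℝ), AEEqFun.coeFn_neg (cst μ q),
      AEEqFun.coeFn_mul |cst μ q| (nrm (x - y)), AEEqFun.coeFn_abs (cst μ q)]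
      with ω hω e1 e2 e3 e4
    rw [hcomb, h.nrm_smul, e3, Pi.mul_apply, e4, e2, Pi.neg_apply] at hω
    rw [cst, e1, Function.const_apply] at hω
    rw [hω, Prod.smul_mk, smul_eq_mul, smul_eq_mul, mul_one, mul_neg_one]
  filter_upwards [hrat] with ω hω s
  refine congrFun (Continuous.ext_on Rat.denseRange_cast
    (f := fun s : ℝ => coeffNorm sm nrm x y ω (s • (1, -1))) (g := fun s => |s| * nrm (x - y) ω)
    ((continuous_coeffNorm ω).comp (continuous_id.smul continuous_const))
    (continuous_abs.mul continuous_const) ?_) s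
  rintro _ ⟨q, rfl⟩
  exact hω q

end IsRNModule

section Root

open Classical in
/-- A zero of `f` when `f 0 ≤ 0 < f 1` (`map_infPosRat_eq_zero`), written as a countable
infimum so that it depends measurably on parameters. -/
def infPosRat (f : ℝ → ℝ) : ℝ :=
  ⨅ q : ℚ, if (q : ℝ) ∈ Icc (0 : ℝ) 1 ∧ 0 < f q then (q : ℝ) else 1

theorem map_infPosRat_eq_zero {f : ℝ → ℝ} (hf : Continuous f) (h0 : f 0 ≤ 0) (h1 : 0 < f 1) :
    f (infPosRat f) = 0 := by
  classical
  set g : ℚ → ℝ := fun q => if (q : ℝ) ∈ Icc (0 : ℝ) 1 ∧ 0 < f q then (q : ℝ) else 1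
  have hg : ∀ q, g q ∈ Icc (0 : ℝ) 1 := fun q => by
    simp only [g]
    split_ifs with hq
    exacts [hq.1, right_mem_Icc.mpr zero_le_one]
  have hbdd : BddBelow (range g) := ⟨0, by rintro _ ⟨q, rfl⟩; exact (hg q).1⟩
  have hle : ∀ q, infPosRat f ≤ g q := ciInf_le hbdd
  have hT0 : 0 ≤ infPosRat f := le_ciInf fun q => (hg q).1
  have hT1 : infPosRat f ≤ 1 := by simpa using (hle 1).trans (hg 1).2
  set T := infPosRat f
  refine le_antisymm (not_lt.mp fun hpos => ?_) (not_lt.mp fun hneg => ?_)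
  · -- `f > 0` near `T > 0` would put a rational point of positivity below `T`
    obtain ⟨δ, hδ, hball⟩ := Metric.eventually_nhds_iff.mp
      ((hf.tendsto T).eventually (lt_mem_nhds hpos))
    have hT : 0 < T := lt_of_le_of_ne hT0 fun hT => by rw [← hT] at hpos; linarith
    obtain ⟨q, hq₁, hq₂⟩ := exists_rat_btwn (max_lt hT (sub_lt_self T hδ))
    have hq₀ := le_max_left 0 (T - δ)
    have hqδ := le_max_right 0 (T - δ)
    have hfq : 0 < f q := hball (by rw [Real.dist_eq, abs_lt]; constructor <;> linarith)
    have := hle q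
    simp only [g, if_pos (⟨⟨by linarith, by linarith⟩, hfq⟩ : (q : ℝ) ∈ Icc (0 : ℝ) 1 ∧ 0 < f q)]
      at this
    linarith
  · -- `f < 0` near `T < 1` would keep every rational point of positivity away from `T`
    obtain ⟨δ, hδ, hball⟩ := Metric.eventually_nhds_iff.mp
      ((hf.tendsto T).eventually (gt_mem_nhds hneg))
    have hT : T < 1 := lt_of_le_of_ne hT1 fun hT => by rw [hT] at hneg; linarith
    have hgap : min (T + δ) 1 ≤ T := le_ciInf fun q => by
      by_cases hq : (q : ℝ) ∈ Icc (0 : ℝ) 1 ∧ 0 < f q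
      · have hTq : T ≤ q := by simpa only [g, if_pos hq] using hle q
        have hfar : ¬ dist (q : ℝ) T < δ := fun hd => (hball hd).not_gt hq.2
        rw [Real.dist_eq, abs_of_nonneg (by linarith)] at hfar
        simp only [hq, and_self, if_true]
        exact min_le_of_left_le (by linarith)
      · simp only [hq, if_false]
        exact min_le_right _ _
    linarith [lt_min (lt_add_of_pos_right T hδ) hT]

theorem exists_measurable_root {G : Ω → ℝ → ℝ} (hcont : ∀ ω, Continuous (G ω))
    (hmeas : ∀ t, Measurable fun ω => G ω t) :
    ∃ τ : Ω → ℝ, Measurable τ ∧ ∀ ω, G ω 0 ≤ 0 → 0 < G ω 1 → G ω (τ ω) = 0 := by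
  classical
  refine ⟨fun ω => infPosRat (G ω), Measurable.iInf fun q => ?_,
    fun ω h0 h1 => map_infPosRat_eq_zero (hcont ω) h0 h1⟩
  exact Measurable.ite ((MeasurableSet.const _).inter (measurableSet_lt measurable_const (hmeas q)))
    measurable_const measurable_const

end Root

section Arc

def arc (t : ℝ) : ℝ × ℝ := (1 - t - t ^ 2, 2 * t - 1)

theorem arc_ne_zero (t : ℝ) : arc t ≠ 0 := by
  intro h
  have h1 : 1 - t - t ^ 2 = 0 := congrArg Prod.fst h
  have h2 : 2 * t - 1 = 0 := congrArg Prod.snd h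
  nlinarith

theorem continuous_arc : Continuous arc := by
  unfold arc
  fun_prop

/-- If `N` is the norm of `a x + b y` as a function of `(a, b)` and `z` is the vector with
coordinates `arc t`, then `gap N t = ‖z - ‖z‖ (x - y)‖ - ‖z‖`. -/
def gap (N : ℝ × ℝ → ℝ) (t : ℝ) : ℝ := N (arc t - N (arc t) • (1, -1)) - N (arc t)

variable {N : ℝ × ℝ → ℝ} {ρ : ℝ}

theorem continuous_gap (hN : Continuous N) : Continuous (gap N) := by
  have hK := hN.comp continuous_arc
  exact (hN.comp (continuous_arc.sub (hK.smul continuous_const))).sub hK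

theorem gap_zero_nonpos (hN : ∀ s : ℝ, N (s • (1, -1)) = |s| * ρ) (h0 : 0 ≤ ρ) (h2 : ρ ≤ 2) :
    gap N 0 ≤ 0 := by
  have harc : arc 0 = (1 : ℝ) • (1, -1) := by simp [arc]
  rw [gap, harc, hN, abs_one, one_mul, ← sub_smul, hN]
  have : |1 - ρ| ≤ 1 := abs_le.mpr ⟨by linarith, by linarith⟩
  nlinarith

theorem gap_one_pos (hN : ∀ s : ℝ, N (s • (1, -1)) = |s| * ρ) (hρ : 0 < ρ) : 0 < gap N 1 := by
  have harc : arc 1 = (-1 : ℝ) • (1, -1) := by ext <;> norm_num [arc]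
  rw [gap, harc, hN, abs_neg, abs_one, one_mul, ← sub_smul, hN,
    show (-1 : ℝ) - ρ = -(1 + ρ) by ring, abs_neg, abs_of_pos (by linarith)]
  nlinarith

end Arc

theorem measurable_gap (t : ℝ) : Measurable fun ω => gap (coeffNorm sm nrm x y ω) t := by
  have hK := measurable_coeffNorm (sm := sm) (nrm := nrm) (x := x) (y := y)
    (f := fun _ => arc t) measurable_const
  exact (measurable_coeffNorm (measurable_const.sub (hK.smul_const _))).sub hK

theorem Indep.ae_eq_zero_of_nrm_eq_zero {E : Set Ω} (hind : Indep sm x y E)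
    (h : IsRNModule μ sm nrm) (hE : MeasurableSet E) (a b : L0 μ) :
    ∀ᵐ ω ∂μ, ω ∈ E → nrm (sm a x + sm b y) ω = 0 → a ω = 0 ∧ b ω = 0 := by
  set z := sm a x + sm b y
  set F := E ∩ {ω | nrm z ω = 0}
  have hF : MeasurableSet F := hE.inter (measurableSet_eq_fun (nrm z).measurable measurable_const)
  set c := ind μ F * ind μ E
  have hc : ∀ᵐ ω ∂μ, c ω = F.indicator (fun _ => (1 : ℝ)) ω := by
    filter_upwards [AEEqFun.coeFn_mul (ind μ F) (ind μ E), ind_coeFn hF, ind_coeFn hE]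
      with ω e1 e2 e3
    rw [e1, Pi.mul_apply, e2, e3]
    by_cases hω : ω ∈ F
    · simp [hω, hω.1]
    · simp [hω]
  have hcz : sm c z = 0 := by
    refine h.nrm_eq_zero _ (AEEqFun.ext ?_)
    rw [h.nrm_smul]
    filter_upwards [AEEqFun.coeFn_mul |c| (nrm z), AEEqFun.coeFn_abs c, hc,
      AEEqFun.coeFn_zero (β := ℝ) (μ := μ)] with ω e1 e2 e3 e4
    rw [e1, e4, Pi.mul_apply, e2, e3, Pi.zero_apply]
    by_cases hω : ω ∈ F
    · rw [indicator_of_mem hω]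
      exact mul_eq_zero_of_right _ hω.2
    · rw [indicator_of_notMem hω, abs_zero, zero_mul]
  have hcomb : sm (a * ind μ F * ind μ E) x + sm (b * ind μ F * ind μ E) y = 0 := by
    have hmul : ∀ d : L0 μ, d * ind μ F * ind μ E = c * d := fun d => by rw [mul_assoc, mul_comm]
    rw [hmul, hmul, h.mul_smul c a, h.mul_smul c b, ← h.smul_add]
    exact hcz
  obtain ⟨ha, hb⟩ := hind _ _ hcomb
  rw [mul_assoc] at ha hb
  have ha' := AEEqFun.coeFn_mul a c
  have hb' := AEEqFun.coeFn_mul b c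
  rw [ha] at ha'
  rw [hb] at hb'
  filter_upwards [ha', hb', hc, AEEqFun.coeFn_zero (β := ℝ) (μ := μ)] with ω e1 e2 e3 e4 hωE hz
  have hωF : ω ∈ F := ⟨hωE, hz⟩
  rw [e4, Pi.mul_apply, e3, indicator_of_mem hωF] at e1 e2
  simp only [Pi.zero_apply, mul_one] at e1 e2
  exact ⟨e1.symm, e2.symm⟩

namespace IsRNModule

variable (h : IsRNModule μ sm nrm) (hx : nrm x ≤ 1) (hy : nrm y ≤ 1)
include h hx hy

theorem gap_sign_ae {E : Set Ω} (hE : MeasurableSet E) (hind : Indep sm x y E) :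
    ∀ᵐ ω ∂μ, ω ∈ E →
      gap (coeffNorm sm nrm x y ω) 0 ≤ 0 ∧ 0 < gap (coeffNorm sm nrm x y ω) 1 := by
  have hxy : sm 1 x + sm (-1) y = x - y := by
    rw [h.neg_smul, h.one_smul, h.one_smul, sub_eq_add_neg]
  have hle : nrm (x - y) ≤ nrm x + nrm y := by
    simpa only [sub_eq_add_neg, h.nrm_neg] using h.nrm_add x (-y)
  filter_upwards [h.coeffNorm_smul_ae hx hy, hind.ae_eq_zero_of_nrm_eq_zero h hE 1 (-1),
    AEEqFun.coeFn_le.mpr (h.nrm_nonneg (x - y)), AEEqFun.coeFn_le.mpr hle,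
    AEEqFun.coeFn_le.mpr hx, AEEqFun.coeFn_le.mpr hy, AEEqFun.coeFn_add (nrm x) (nrm y),
    AEEqFun.coeFn_zero (β := ℝ) (μ := μ), AEEqFun.coeFn_one (β := ℝ) (μ := μ)]
    with ω hN hR h0 h2 h2x h2y e1 e2 e3 hωE
  rw [e2, Pi.zero_apply] at h0
  rw [e1, Pi.add_apply] at h2
  rw [e3, Pi.one_apply] at h2x h2y
  have hpos : 0 < nrm (x - y) ω :=
    h0.lt_of_ne fun h0' => by simpa [e3] using (hR hωE (hxy ▸ h0'.symm)).1
  exact ⟨gap_zero_nonpos hN h0 (by linarith), gap_one_pos hN hpos⟩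

theorem exists_nrm_eq_of_indep {E : Set Ω} (hE : MeasurableSet E) (hind : Indep sm x y E) :
    ∃ z w : S, ∃ k : L0 μ, (∀ᵐ ω ∂μ, ω ∈ E → 0 < k ω) ∧ (∀ᵐ ω ∂μ, ω ∈ E → nrm z ω = k ω) ∧
      (∀ᵐ ω ∂μ, ω ∈ E → nrm w ω = k ω) ∧ z - w = sm k (x - y) := by
  set N := coeffNorm sm nrm x y
  obtain ⟨τ, hτ, hroot⟩ :=
    exists_measurable_root (G := fun ω => gap (N ω))
      (fun ω => continuous_gap (continuous_coeffNorm ω)) measurable_gap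
  have hc : Measurable fun ω => arc (τ ω) := continuous_arc.measurable.comp hτ
  have hκ : Measurable fun ω => N ω (arc (τ ω)) := measurable_coeffNorm hc
  set a : L0 μ := AEEqFun.mk (fun ω => (arc (τ ω)).1) hc.fst.aestronglyMeasurable
  set b : L0 μ := AEEqFun.mk (fun ω => (arc (τ ω)).2) hc.snd.aestronglyMeasurable
  set k : L0 μ := AEEqFun.mk (fun ω => N ω (arc (τ ω))) hκ.aestronglyMeasurable
  have ha : ⇑a =ᵐ[μ] fun ω => (arc (τ ω)).1 := AEEqFun.coeFn_mk _ _
  have hb : ⇑b =ᵐ[μ] fun ω => (arc (τ ω)).2 := AEEqFun.coeFn_mk _ _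
  have hk : ⇑k =ᵐ[μ] fun ω => N ω (arc (τ ω)) := AEEqFun.coeFn_mk _ _
  have hz : ∀ᵐ ω ∂μ, nrm (sm a x + sm b y) ω = k ω := by
    filter_upwards [h.nrm_smul_add_smul_ae hx hy a b, ha, hb, hk] with ω e e1 e2 e3
    rw [e, e1, e2, e3]
  refine ⟨sm a x + sm b y, sm (a - k) x + sm (b + k) y, k, ?_, ?_, ?_, ?_⟩
  · filter_upwards [hind.ae_eq_zero_of_nrm_eq_zero h hE a b, hz, ha, hb, hk]
      with ω hab e e1 e2 e3 hωE
    refine lt_of_le_of_ne (by rw [e3]; exact ratLipExt_nonneg _) fun h0 => arc_ne_zero (τ ω) ?_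
    obtain ⟨h1, h2⟩ := hab hωE (e.trans h0.symm)
    exact Prod.ext (e1 ▸ h1) (e2 ▸ h2)
  · filter_upwards [hz] with ω e _ using e
  · filter_upwards [h.nrm_smul_add_smul_ae hx hy (a - k) (b + k), AEEqFun.coeFn_sub a k,
      AEEqFun.coeFn_add b k, ha, hb, hk, h.gap_sign_ae hx hy hE hind]
      with ω e e1 e2 e3 e4 e5 hsign hωE
    have hzero := hroot ω (hsign hωE).1 (hsign hωE).2
    rw [gap, sub_eq_zero] at hzero
    rw [e, e1, e2, Pi.sub_apply, Pi.add_apply, e3, e4, e5]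
    convert hzero using 2
    ext <;> simp [sub_eq_add_neg]
  · rw [h.sub_smul, h.add_smul, h.smul_sub]
    abel

end IsRNModule

theorem exists_sphere_pair_of_indep_general {Ω : Type*} [MeasurableSpace Ω] (μ : Measure Ω)
    {S : Type*} [AddCommGroup S]
    (sm : L0 μ → S → S) (nrm : S → L0 μ) (hRN : IsRNModule μ sm nrm)
    (E : Set Ω) (hEm : MeasurableSet E)
    (x y : S) (hx : nrm x = ind μ (Axy nrm x y)) (hy : nrm y ≤ 1)
    (hind : Indep sm x y E) :
    ∃ u v : S, nrm u = ind μ E ∧ nrm v = ind μ E ∧ u - v = sm (ind μ E) (x - y) := by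
  obtain ⟨z, w, k, hk, hz, hw, hzw⟩ :=
    hRN.exists_nrm_eq_of_indep (hx ▸ ind_le_one _) hy hEm hind
  exact hRN.exists_nrm_eq_ind_of_nrm_eq hEm hk hz hw hzw

/-- **Lemma 3.1.** If `‖x‖ = I_{A_{xy}}`, `‖y‖ ≤ 1` and `x, y` are `L⁰`-independent on `E`
with `P(E) > 0`, then there exist `u_E, v_E` with `‖u_E‖ = ‖v_E‖ = I_E` and
`u_E - v_E = I_E (x - y)`. -/
theorem exists_sphere_pair_of_indep {Ω : Type*} [MeasurableSpace Ω] (μ : Measure Ω)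
    [IsProbabilityMeasure μ] {S : Type*} [AddCommGroup S]
    (sm : L0 μ → S → S) (nrm : S → L0 μ) (hRN : IsRNModule μ sm nrm)
    (E : Set Ω) (hEm : MeasurableSet E) (hEpos : 0 < μ E)
    (x y : S) (hx : nrm x = ind μ (Axy nrm x y)) (hy : nrm y ≤ 1)
    (hind : Indep sm x y E) :
    ∃ u v : S, nrm u = ind μ E ∧ nrm v = ind μ E ∧ u - v = sm (ind μ E) (x - y) :=
  exists_sphere_pair_of_indep_general μ sm nrm hRN E hEm x y hx hy hind

end RNM
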